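/- If A is an n×n row-stochastic matrix (nonnegative entries, each row summing to 1), then for every X ∈ ℚ^{C(n,2)}: X·A^{∨2}·uᵀ = ½·tr(X̂(J − AAᵀ)). -/

import Mathlib

open Matrix BigOperators Filter

/-- Index set of pairs `(i,j)` with `i < j`. -/
abbrev Pairs (n : ℕ) := {p : Fin n × Fin n // p.1 < p.2}

/-- Zeon second power: matrix of 2×2 permanents. -/
def zeonSq {n : ℕ} {R : Type*} [CommRing R] (A : Matrix (Fin n) (Fin n) R) :
    Matrix (Pairs n) (Pairs n) R :=
  Matrix.of fun I J =>
    A I.1.1 J.1.1 * A I.1.2 J.1.2 + A I.1.1 J.1.2 * A I.1.2 J.1.1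

/-- `Mat(X)`: symmetric matrix with zero diagonal built from a vector indexed by pairs. -/
def matOf {n : ℕ} {R : Type*} [CommRing R] (X : Pairs n → R) :
    Matrix (Fin n) (Fin n) R :=
  Matrix.of fun i j =>
    if h : i < j then X ⟨(i, j), h⟩ else if h' : j < i then X ⟨(j, i), h'⟩ else 0

/-!
Both sides are sums over pairs `i < j`. Row `(i, j)` of `A^{∨2}` sums to
`(∑ₖ A i k)(∑ₗ A j l) - (A Aᵀ) i j`, since the ordered pairs `(k, l)` with `k ≠ l` are exactly
the two orderings of the unordered pairs; for a row-stochastic `A` this is `1 - (A Aᵀ) i j`.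
On the other side, `X̂` is symmetric with zero diagonal, so `tr(X̂ M)` counts the entry
`x_{ij}` twice against the symmetric matrix `M = J - A Aᵀ`.
-/

section Pairs

variable {n : ℕ} {M : Type*} [AddCommGroup M]

theorem sum_pairs_add_swap (f : Fin n → Fin n → M) :
    ∑ p : Pairs n, (f p.1.1 p.1.2 + f p.1.2 p.1.1) = ∑ k, ∑ l, f k l - ∑ k, f k k := by
  set upper : Finset (Fin n × Fin n) := {p | p.1 < p.2}
  set lower : Finset (Fin n × Fin n) := {p | p.2 < p.1}
  set onDiag : Finset (Fin n × Fin n) := {p | p.1 = p.2}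
  have hpairs : ∑ p : Pairs n, (f p.1.1 p.1.2 + f p.1.2 p.1.1)
      = ∑ p ∈ upper, (f p.1 p.2 + f p.2 p.1) :=
    (Finset.sum_subtype upper (fun _ => by simp [upper]) fun p => f p.1 p.2 + f p.2 p.1).symm
  have hswap : ∑ p ∈ upper, f p.2 p.1 = ∑ p ∈ lower, f p.1 p.2 :=
    Finset.sum_nbij' Prod.swap Prod.swap (by simp [upper, lower]) (by simp [upper, lower])
      (by simp) (by simp) (by simp)
  have hdiag : ∑ p ∈ onDiag, f p.1 p.2 = ∑ k, f k k :=
    Finset.sum_nbij' Prod.fst (fun k => (k, k)) (by simp) (by simp [onDiag]) (by simp [onDiag])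
      (by simp) (by simp +contextual [onDiag])
  have hsplit : ∑ p ∈ upper, f p.1 p.2 + ∑ p ∈ lower, f p.1 p.2 + ∑ p ∈ onDiag, f p.1 p.2
      = ∑ k, ∑ l, f k l := by
    rw [← Finset.sum_union, ← Finset.sum_union, ← Fintype.sum_prod_type']
    · congr 1
      ext p
      simp only [Finset.mem_union, Finset.mem_filter, Finset.mem_univ, true_and, upper, lower,
        onDiag]
      have := lt_trichotomy p.1 p.2
      tauto
    · simp only [Finset.disjoint_left, Finset.mem_union, Finset.mem_filter, Finset.mem_univ,
        true_and, upper, lower, onDiag]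
      rintro p (h | h) h' <;> simp [h'] at h
    · simp only [Finset.disjoint_left, Finset.mem_filter, Finset.mem_univ, true_and, upper, lower]
      exact fun _ h => lt_asymm h
  rw [hpairs, Finset.sum_add_distrib, hswap, ← hdiag, ← hsplit]
  abel

end Pairs

section CommRing

variable {n : ℕ} {R : Type*} [CommRing R]

theorem matOf_apply_pair (X : Pairs n → R) (p : Pairs n) : matOf X p.1.1 p.1.2 = X p := by
  simp [matOf, p.2]

theorem matOf_apply_pair_swap (X : Pairs n → R) (p : Pairs n) :
    matOf X p.1.2 p.1.1 = X p := by
  simp [matOf, p.2, not_lt_of_gt p.2]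

theorem matOf_apply_self (X : Pairs n → R) (k : Fin n) : matOf X k k = 0 := by
  simp [matOf]

theorem trace_matOf_mul (X : Pairs n → R) (M : Matrix (Fin n) (Fin n) R) :
    trace (matOf X * M) = ∑ p : Pairs n, X p * (M p.1.2 p.1.1 + M p.1.1 p.1.2) := by
  have h := sum_pairs_add_swap fun i j => matOf X i j * M j i
  simp only [matOf_apply_pair, matOf_apply_pair_swap, matOf_apply_self, zero_mul,
    Finset.sum_const_zero, sub_zero] at h
  simp only [trace, diag, mul_apply, ← h, mul_add]

theorem zeonSq_mulVec_one (A : Matrix (Fin n) (Fin n) R) :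
    zeonSq A *ᵥ 1 = fun I => (∑ k, A I.1.1 k) * (∑ l, A I.1.2 l) - (A * Aᵀ) I.1.1 I.1.2 := by
  ext I
  have h := sum_pairs_add_swap fun k l => A I.1.1 k * A I.1.2 l
  simp only [← Finset.mul_sum, ← Finset.sum_mul] at h
  simpa [mulVec, dotProduct, zeonSq, mul_apply] using h

end CommRing

theorem stmt8_general {n : ℕ} (A : Matrix (Fin n) (Fin n) ℚ)
    (hA1 : ∀ i, ∑ j, A i j = 1) (X : Pairs n → ℚ) :
    (X ᵥ* zeonSq A) ⬝ᵥ (fun _ => 1) =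
      (1 / 2) * Matrix.trace (matOf X * (Matrix.of (fun _ _ => (1 : ℚ)) - A * Aᵀ)) := by
  have hrow : zeonSq A *ᵥ 1 = fun I => 1 - (A * Aᵀ) I.1.1 I.1.2 := by
    simp [zeonSq_mulVec_one, hA1]
  rw [← Pi.one_def, ← dotProduct_mulVec, hrow, trace_matOf_mul, dotProduct, Finset.mul_sum]
  refine Finset.sum_congr rfl fun p _ => ?_
  simp only [Matrix.sub_apply, of_apply]
  rw [(isSymm_mul_transpose_self A).apply p.1.1 p.1.2]
  ring

theorem stmt8 {n : ℕ} (A : Matrix (Fin n) (Fin n) ℚ)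
    (hA0 : ∀ i j, 0 ≤ A i j) (hA1 : ∀ i, ∑ j, A i j = 1) (X : Pairs n → ℚ) :
    (X ᵥ* zeonSq A) ⬝ᵥ (fun _ => 1) =
      (1 / 2) * Matrix.trace (matOf X * (Matrix.of (fun _ _ => (1 : ℚ)) - A * Aᵀ)) :=
  stmt8_general A hA1 X
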